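/- Suppose S is join closed and Ψ'_{S,f_i}(x_i) ≠ 0 for every i = 1,…,n. Then rank [S]_{f_1,…,f_n} = n, i.e. the row-adjusted join matrix has full rank. -/

import Mathlib

open Finset Matrix
open scoped Classical

/-!
The Möbius function `μ` is the inverse of the zeta matrix `ζ v j = [x v ≤ x j]` of `S`, so Möbius
inversion gives `f i (x m) = ∑_{x m ≤ x v} Ψ'_{S,f i}(x v)`. For `x m = x i ⊔ x j` the condition
`x m ≤ x v` splits as `x i ≤ x v ∧ x j ≤ x v`, which factors the join matrix as `B * ζᵀ` with
`B i v = [x i ≤ x v] Ψ'_{S,f i}(x v)`. As the indexing is a linear extension of the order, `B` is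
upper triangular with diagonal entries `Ψ'_{S,f i}(x i) ≠ 0`; since `ζ` is invertible, the rank
is `n`.
-/

section JoinMatrix

variable {ι P R : Type*} [Fintype ι]

noncomputable def zetaMatrix [Preorder P] [Zero R] [One R] (x : ι → P) : Matrix ι ι R :=
  of fun i j => if x i ≤ x j then 1 else 0

/-- When `M` is the Möbius matrix of `x`, `(M *ᵥ fun w => f i (x w)) v` is `Ψ'_{S,f i}(x v)`. -/
noncomputable def psiMatrix [Preorder P] [NonUnitalNonAssocSemiring R] (x : ι → P)
    (f : ι → P → R) (M : Matrix ι ι R) : Matrix ι ι R :=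
  of fun i v => if x i ≤ x v then (M *ᵥ fun w => f i (x w)) v else 0

section Mobius

variable [Preorder P] (x : ι → P) (μ : ι → ι → R)

theorem of_mul_zetaMatrix_apply [NonAssocSemiring R] (hμ0 : ∀ i j, ¬ x i ≤ x j → μ i j = 0)
    (i j : ι) :
    (of μ * zetaMatrix x : Matrix ι ι R) i j =
      ∑ v ∈ univ.filter (fun v => x i ≤ x v ∧ x v ≤ x j), μ i v := by
  simp only [mul_apply, zetaMatrix, of_apply, mul_ite, mul_one, mul_zero, ← sum_filter]
  refine (sum_subset (fun v hv => by simp_all) fun v hv hv' => ?_).symm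
  simp only [mem_filter, mem_univ, true_and] at hv hv'
  exact hμ0 i v fun hiv => hv' ⟨hiv, hv⟩

theorem of_mul_zetaMatrix_eq_one [DecidableEq ι] [NonAssocSemiring R]
    (hμ0 : ∀ i j, ¬ x i ≤ x j → μ i j = 0)
    (hμ : ∀ i j, x i ≤ x j →
      (∑ v ∈ univ.filter (fun v => x i ≤ x v ∧ x v ≤ x j), μ i v) = if i = j then 1 else 0) :
    of μ * zetaMatrix x = 1 := by
  ext i j
  rw [of_mul_zetaMatrix_apply x μ hμ0, one_apply]
  by_cases hij : x i ≤ x j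
  · exact hμ i j hij
  · rw [if_neg fun (h : i = j) => hij (h ▸ le_rfl),
      filter_false_of_mem fun v _ h => hij (h.1.trans h.2), sum_empty]

theorem psiMatrix_of_apply_self [CommSemiring R] (f : ι → P → R)
    (hμ0 : ∀ i j, ¬ x i ≤ x j → μ i j = 0) (i : ι) :
    psiMatrix x f (of μ) i i = ∑ v ∈ univ.filter (fun v => x i ≤ x v), f i (x v) * μ i v := by
  rw [psiMatrix, of_apply, if_pos le_rfl, mulVec, dotProduct, sum_filter]
  refine sum_congr rfl fun v _ => ?_
  split_ifs with hiv
  · exact mul_comm _ _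
  · simp [hμ0 i v hiv]

end Mobius

theorem of_sup_eq_psiMatrix_mul_zetaMatrix_transpose [DecidableEq ι] [Lattice P] [Semiring R]
    (x : ι → P) (f : ι → P → R) (M : Matrix ι ι R) (hζM : zetaMatrix x * M = 1)
    (hjoin : ∀ i j, ∃ k, x k = x i ⊔ x j) :
    of (fun i j => f i (x i ⊔ x j)) = psiMatrix x f M * (zetaMatrix x)ᵀ := by
  ext i j
  obtain ⟨m, hm⟩ := hjoin i j
  have inversion : f i (x m) = (zetaMatrix x *ᵥ M *ᵥ fun w => f i (x w)) m := by
    rw [mulVec_mulVec, hζM, one_mulVec]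
  rw [of_apply, ← hm, inversion, mulVec, dotProduct, mul_apply]
  refine sum_congr rfl fun v _ => ?_
  simp only [zetaMatrix, psiMatrix, of_apply, transpose_apply, hm, sup_le_iff]
  split_ifs <;> simp_all

theorem psiMatrix_isUpperTriangular [LinearOrder ι] [Preorder P] [NonUnitalNonAssocSemiring R]
    (x : ι → P) (f : ι → P → R) (M : Matrix ι ι R) (hxord : ∀ i j, x i ≤ x j → i ≤ j) :
    (psiMatrix x f M).IsUpperTriangular :=
  fun i j hji => if_neg fun h => (hxord i j h).not_gt hji

end JoinMatrix

theorem row_adjusted_join_matrix_rank_of_ne_zero_general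
    {P : Type*} [Lattice P] {n : ℕ}
    (x : Fin n → P) (f : Fin n → P → ℂ) (μ : Fin n → Fin n → ℂ)
    (hxord : ∀ i j : Fin n, x i ≤ x j → i ≤ j)
    (hjoin : ∀ i j : Fin n, ∃ k : Fin n, x k = x i ⊔ x j)
    (hμ0 : ∀ i j : Fin n, ¬ x i ≤ x j → μ i j = 0)
    (hμ : ∀ i j : Fin n, x i ≤ x j →
      (∑ v ∈ univ.filter (fun v => x i ≤ x v ∧ x v ≤ x j), μ i v) =
        if i = j then 1 else 0)
    (hΨ : ∀ i : Fin n,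
      (∑ v ∈ univ.filter (fun v => x i ≤ x v), f i (x v) * μ i v) ≠ 0) :
    (Matrix.of fun i j : Fin n => f i (x i ⊔ x j)).rank = n := by
  have hμζ := of_mul_zetaMatrix_eq_one x μ hμ0 hμ
  have hζ : IsUnit (zetaMatrix x : Matrix (Fin n) (Fin n) ℂ)ᵀ.det := by
    rw [det_transpose]
    exact isUnit_det_of_left_inverse hμζ
  have hB : IsUnit (psiMatrix x f (of μ)).det := by
    rw [det_of_isUpperTriangular (psiMatrix_isUpperTriangular x f _ hxord), isUnit_iff_ne_zero,
      prod_ne_zero_iff]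
    intro i _
    rw [psiMatrix_of_apply_self x μ f hμ0]
    exact hΨ i
  rw [of_sup_eq_psiMatrix_mul_zetaMatrix_transpose x f _ (mul_eq_one_comm.mp hμζ) hjoin,
    rank_mul_eq_left_of_isUnit_det _ _ hζ, rank_of_isUnit _ ((isUnit_iff_isUnit_det _).mpr hB),
    Fintype.card_fin]

/-- If `S` is join closed and `Ψ'_{S,f i}(x i) ≠ 0` for every `i`, then the
row-adjusted join matrix `[S]_{f₁,…,fₙ}` has full rank `n`. -/
theorem row_adjusted_join_matrix_rank_of_ne_zero
    {P : Type*} [Lattice P] {n : ℕ}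
    (x : Fin n → P) (f : Fin n → P → ℂ) (μ : Fin n → Fin n → ℂ)
    (hxinj : Function.Injective x)
    (hxord : ∀ i j : Fin n, x i ≤ x j → i ≤ j)
    (hjoin : ∀ i j : Fin n, ∃ k : Fin n, x k = x i ⊔ x j)
    (hμ0 : ∀ i j : Fin n, ¬ x i ≤ x j → μ i j = 0)
    (hμ : ∀ i j : Fin n, x i ≤ x j →
      (∑ v ∈ univ.filter (fun v => x i ≤ x v ∧ x v ≤ x j), μ i v) =
        if i = j then 1 else 0)
    (hΨ : ∀ i : Fin n,
      (∑ v ∈ univ.filter (fun v => x i ≤ x v), f i (x v) * μ i v) ≠ 0) :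
    (Matrix.of fun i j : Fin n => f i (x i ⊔ x j)).rank = n :=
  row_adjusted_join_matrix_rank_of_ne_zero_general x f μ hxord hjoin hμ0 hμ hΨ
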